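/- arXiv:2301.01985 — 2 statements merged into one kernel-verified Lean document; each statement's English description precedes it below -/
import Mathlib

section
/- Let F(k) = (−1)^k A_k. For every polynomial x with rational coefficients and every integer n ≥ 1, ∑_{k=0}^{n−1} [ k^3 x(k−2) + (2k+1)(17k^2+17k+5) x(k−1) + (k+1)^3 x(k) ] · (−1)^k A_k = n^3 · ( x(n−1) F(n−1) − x(n−2) F(n) ), where x is evaluated at the indicated integers (which may be negative). -/
open Finset Polynomial

/-- The Apéry numbers `A n = ∑_{k=0}^n (n choose k)^2 ((n+k) choose k)^2`. -/
def apery (n : ℕ) : ℤ :=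
  ∑ k ∈ Finset.range (n + 1), ((n.choose k : ℤ)) ^ 2 * (((n + k).choose k : ℤ)) ^ 2

/-!
With `F k = (-1)^k A_k` and `b k = (2k+1)(17k^2+17k+5)`, Apéry's recurrence reads
`k^3 F(k-1) + b k F k + (k+1)^3 F(k+1) = 0` for every `k ≥ 0` (at `k = 0` the first term
vanishes).
The summand is `x` hit by the adjoint of this three-term operator, times `F`, so passing from `n`
to `n + 1` changes the difference of the two sides by `x(n-1)` times the recurrence at `n`:
the sum telescopes to the boundary term. Apéry's recurrence itself follows by summing over `k`
Zeilberger's creative-telescoping identity for the summands `C(n,k)^2 C(n+k,k)^2`.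
-/

theorem sum_range_adjoint_mul_eq_of_recurrence {R : Type*} [CommRing R] (p b F : ℕ → R)
    (x : ℤ → R) (hp : p 0 = 0)
    (hF : ∀ k, p k * F (k - 1) + b k * F k + p (k + 1) * F (k + 1) = 0) (n : ℕ) :
    ∑ k ∈ range n, (p k * x (k - 2) + b k * x (k - 1) + p (k + 1) * x k) * F k =
      p n * (x (n - 1) * F (n - 1) - x (n - 2) * F n) := by
  induction n with
  | zero => simp [hp]
  | succ n ih =>
    rw [sum_range_succ, ih, Nat.add_sub_cancel]
    push_cast
    rw [add_sub_cancel_right, show (n : ℤ) + 1 - 2 = n - 1 by ring]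
    linear_combination x (n - 1) * hF n

section CastChoose

variable {R : Type*} [CommRing R]

theorem cast_choose_succ_mul_sub (n k : ℕ) :
    ((n : R) + 1 - k) * (n + 1).choose k = (n + 1) * n.choose k := by
  rcases le_or_gt k (n + 1) with hk | hk
  · have h := congrArg (Nat.cast : ℕ → R) (Nat.choose_mul_succ_eq n k)
    push_cast [hk] at h
    linear_combination -h
  · simp [Nat.choose_eq_zero_of_lt hk, Nat.choose_eq_zero_of_lt (Nat.lt_of_succ_lt hk)]

theorem cast_succ_mul_choose_succ (n k : ℕ) :
    ((k : R) + 1) * n.choose (k + 1) = ((n : R) - k) * n.choose k := by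
  rcases le_or_gt k n with hk | hk
  · have h := congrArg (Nat.cast : ℕ → R) (Nat.choose_succ_right_eq n k)
    push_cast [hk] at h
    linear_combination h
  · simp [Nat.choose_eq_zero_of_lt hk, Nat.choose_eq_zero_of_lt (Nat.lt_succ_of_lt hk)]

theorem cast_succ_mul_add_choose (n k : ℕ) :
    ((k : R) + 1) * (n + k + 1).choose (k + 1) = ((n : R) + k + 1) * (n + k).choose k := by
  have h := congrArg (Nat.cast : ℕ → R) (Nat.add_one_mul_choose_eq (n + k) k)
  push_cast at h
  linear_combination -h

theorem cast_succ_mul_succ_add_choose (n k : ℕ) :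
    ((n : R) + 1) * (n + 1 + k).choose k = ((n : R) + 1 + k) * (n + k).choose k := by
  have h := congrArg (Nat.cast : ℕ → R) (Nat.add_one_mul_choose_eq (n + k) n)
  rw [Nat.choose_symm_add, show n + k + 1 = n + 1 + k by ring,
    Nat.choose_symm_add] at h
  push_cast at h
  linear_combination -h

end CastChoose

def aperyTerm (n k : ℕ) : ℚ := (n.choose k : ℚ) ^ 2 * ((n + k).choose k : ℚ) ^ 2

theorem cast_apery_eq_sum_aperyTerm {m N : ℕ} (h : m < N) :
    (apery m : ℚ) = ∑ k ∈ range N, aperyTerm m k := by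
  rw [apery, Int.cast_sum]
  push_cast
  refine sum_subset (range_subset_range.mpr h) fun k _ hk ↦ ?_
  simp [Nat.choose_eq_zero_of_lt (not_lt.mp (mt mem_range.mpr hk))]

/-- Zeilberger's creative-telescoping certificate for Apéry's recurrence. -/
def aperyCertificate (n k : ℕ) : ℚ :=
  (k : ℚ) ^ 4 * (2 * n + 3) * (8 * (k : ℚ) ^ 2 - 12 * k - 16 * (n : ℚ) ^ 2 - 48 * n - 32) *
    ((n + 2).choose k : ℚ) ^ 2 * ((n + k).choose k : ℚ) ^ 2 / ((n + 1) * (n + 2)) ^ 2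

theorem aperyTerm_recurrence_eq_sub (n k : ℕ) :
    ((n : ℚ) + 2) ^ 3 * aperyTerm (n + 2) k
        - (2 * n + 3) * (17 * (n : ℚ) ^ 2 + 51 * n + 39) * aperyTerm (n + 1) k
        + ((n : ℚ) + 1) ^ 3 * aperyTerm n k
      = aperyCertificate n (k + 1) - aperyCertificate n k := by
  set N : ℚ := (n : ℚ)
  set K : ℚ := (k : ℚ)
  have hN1 : N + 1 ≠ 0 := by positivity
  have hN2 : N + 2 ≠ 0 := by positivity
  have hK1 : K + 1 ≠ 0 := by positivity
  have hNK1 : N + 1 + K ≠ 0 := by positivity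
  have hNK2 : N + 2 + K ≠ 0 := by positivity
  set c : ℚ := ((n + 2).choose k : ℚ)
  set w : ℚ := ((n + 2 + k).choose k : ℚ)
  -- each binomial coefficient is a rational multiple of `c` or `w`, leaving an identity of
  -- rational functions in `n` and `k`
  have e₁ := cast_choose_succ_mul_sub (R := ℚ) (n + 1) k
  have e₀ := cast_choose_succ_mul_sub (R := ℚ) n k
  have f₁ := cast_succ_mul_succ_add_choose (R := ℚ) (n + 1) k
  have f₀ := cast_succ_mul_succ_add_choose (R := ℚ) n k
  have g₁ := cast_succ_mul_choose_succ (R := ℚ) (n + 2) k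
  have g₀ := cast_succ_mul_add_choose (R := ℚ) n k
  rw [show n + 1 + 1 = n + 2 from rfl] at e₁ f₁
  rw [show n + 1 + 1 + k = n + 2 + k from rfl] at f₁
  push_cast at e₁ e₀ f₁ f₀ g₁ g₀
  have hb : ((n + 1).choose k : ℚ) = (N + 2 - K) * c / (N + 2) := by
    rw [eq_div_iff hN2]; linear_combination -e₁
  have ha : (n.choose k : ℚ) = (N + 1 - K) * (n + 1).choose k / (N + 1) := by
    rw [eq_div_iff hN1]; linear_combination -e₀
  have hv : ((n + 1 + k).choose k : ℚ) = (N + 2) * w / (N + 2 + K) := by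
    rw [eq_div_iff hNK2]; linear_combination -f₁
  have hu : ((n + k).choose k : ℚ) = (N + 1) * (n + 1 + k).choose k / (N + 1 + K) := by
    rw [eq_div_iff hNK1]; linear_combination -f₀
  have hb' : ((n + 2).choose (k + 1) : ℚ) = (N + 2 - K) * c / (K + 1) := by
    rw [eq_div_iff hK1]; linear_combination g₁
  have hu' : ((n + k + 1).choose (k + 1) : ℚ) = (N + K + 1) * (n + k).choose k / (K + 1) := by
    rw [eq_div_iff hK1]; linear_combination g₀
  simp only [aperyTerm, aperyCertificate, show n + (k + 1) = n + k + 1 from rfl]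
  rw [hb', hu', hu, hv, ha, hb]
  push_cast
  field_simp
  ring

theorem apery_recurrence (n : ℕ) :
    ((n : ℤ) + 2) ^ 3 * apery (n + 2)
      - (2 * n + 3) * (17 * (n : ℤ) ^ 2 + 51 * n + 39) * apery (n + 1)
      + ((n : ℤ) + 1) ^ 3 * apery n = 0 := by
  suffices h : ((n : ℚ) + 2) ^ 3 * apery (n + 2)
      - (2 * n + 3) * (17 * (n : ℚ) ^ 2 + 51 * n + 39) * apery (n + 1)
      + ((n : ℚ) + 1) ^ 3 * apery n = 0 by exact_mod_cast h
  rw [cast_apery_eq_sum_aperyTerm (N := n + 3) (by omega), cast_apery_eq_sum_aperyTerm (N := n + 3)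
    (by omega), cast_apery_eq_sum_aperyTerm (N := n + 3) (by omega), mul_sum, mul_sum, mul_sum,
    ← sum_sub_distrib, ← sum_add_distrib]
  simp only [aperyTerm_recurrence_eq_sub]
  rw [sum_range_sub]
  simp [aperyCertificate]

theorem apery_alternating_recurrence (k : ℕ) :
    (k : ℚ) ^ 3 * ((-1) ^ (k - 1) * apery (k - 1))
      + (2 * k + 1) * (17 * (k : ℚ) ^ 2 + 17 * k + 5) * ((-1) ^ k * apery k)
      + ((k : ℚ) + 1) ^ 3 * ((-1) ^ (k + 1) * apery (k + 1)) = 0 := by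
  cases k with
  | zero => norm_num [apery, sum_range_succ]
  | succ m =>
    have h : (_ : ℚ) = _ := congrArg (Int.cast : ℤ → ℚ) (apery_recurrence m)
    push_cast at h
    simp only [Nat.add_sub_cancel]
    push_cast
    linear_combination (-1) ^ m * h

theorem apery_alternating_telescoped_sum_general (x : Polynomial ℚ) (n : ℕ) :
    ∑ k ∈ Finset.range n,
      ((k : ℚ) ^ 3 * x.eval ((k : ℚ) - 2)
        + (2 * (k : ℚ) + 1) * (17 * (k : ℚ) ^ 2 + 17 * k + 5) * x.eval ((k : ℚ) - 1)
        + ((k : ℚ) + 1) ^ 3 * x.eval (k : ℚ)) * ((-1 : ℚ) ^ k * (apery k : ℚ))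
      = (n : ℚ) ^ 3 *
          (x.eval ((n : ℚ) - 1) * ((-1 : ℚ) ^ (n - 1) * (apery (n - 1) : ℚ))
            - x.eval ((n : ℚ) - 2) * ((-1 : ℚ) ^ n * (apery n : ℚ))) := by
  have h := sum_range_adjoint_mul_eq_of_recurrence (fun k ↦ (k : ℚ) ^ 3)
    (fun k ↦ (2 * k + 1) * (17 * (k : ℚ) ^ 2 + 17 * k + 5))
    (fun k ↦ (-1) ^ k * (apery k : ℚ))
    (fun z : ℤ ↦ x.eval (z : ℚ)) (by simp) (by exact_mod_cast apery_alternating_recurrence) n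
  push_cast at h
  exact h

theorem apery_alternating_telescoped_sum (x : Polynomial ℚ) (n : ℕ) (hn : 1 ≤ n) :
    ∑ k ∈ Finset.range n,
      ((k : ℚ) ^ 3 * x.eval ((k : ℚ) - 2)
        + (2 * (k : ℚ) + 1) * (17 * (k : ℚ) ^ 2 + 17 * k + 5) * x.eval ((k : ℚ) - 1)
        + ((k : ℚ) + 1) ^ 3 * x.eval (k : ℚ)) * ((-1 : ℚ) ^ k * (apery k : ℚ))
      = (n : ℚ) ^ 3 *
          (x.eval ((n : ℚ) - 1) * ((-1 : ℚ) ^ (n - 1) * (apery (n - 1) : ℚ))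
            - x.eval ((n : ℚ) - 2) * ((-1 : ℚ) ^ n * (apery n : ℚ))) :=
  apery_alternating_telescoped_sum_general x n
end

section
/- For every odd prime p, every r ∈ ℕ, and every z ∈ ℤ, one has ∑_{k=0}^{p−1} (2k+1)^{2r+1} D_k(z) ≡ 0 (mod p). -/
/-!
Reflect the summation index, `k ↦ p - 1 - k`. Modulo `p` this sends `2k + 1` to `-(2k + 1)`, and it
fixes `D_k(z)`: up to the unit `(i!)²`, the coefficient `C(k,i) C(k+i,i)` is the falling factorial
`(k+i)(k+i-1)⋯(k-i+1)`, which is invariant under `k ↦ -1 - k`. Hence the sum `S` satisfies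
`S ≡ -S`, and `p` is odd.
-/

open Finset

/-- The central Delannoy polynomials `D k (z) = ∑_{i=0}^k (k choose i) ((k+i) choose i) z^i`. -/
def delannoy (k : ℕ) (z : ℤ) : ℤ :=
  ∑ i ∈ Finset.range (k + 1), (k.choose i : ℤ) * ((k + i).choose i : ℤ) * z ^ i

open Nat Polynomial

theorem descPochhammer_eval_sub_one_sub {R : Type*} [Ring R] (n : ℕ) (x : R) :
    (descPochhammer R n).eval ((n : R) - 1 - x) = (-1) ^ n * (descPochhammer R n).eval x := by
  rw [descPochhammer_eval_eq_ascPochhammer, ← ascPochhammer_eval_neg_eq_descPochhammer]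
  congr 1
  abel

theorem factorial_mul_factorial_mul_choose_mul_choose (m i : ℕ) :
    i ! * i ! * (m.choose i * (m + i).choose i) = (m + i).descFactorial (2 * i) := by
  rw [← descFactorial_mul_descFactorial (k := i) (by omega), Nat.add_sub_cancel,
    show 2 * i - i = i by omega, descFactorial_eq_factorial_mul_choose,
    descFactorial_eq_factorial_mul_choose, add_comm m i]
  ring

theorem factorial_mul_factorial_mul_choose_mul_choose_eq {R : Type*} [CommRing R] {m m' : ℕ}
    (h : (m + m' + 1 : R) = 0) (i : ℕ) :
    (i ! * i ! * (m'.choose i * (m' + i).choose i) : R) =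
      i ! * i ! * (m.choose i * (m + i).choose i) := by
  have hm' : ((m' + i : ℕ) : R) = ((2 * i : ℕ) : R) - 1 - ((m + i : ℕ) : R) := by
    push_cast
    linear_combination h
  simp only [← Nat.cast_mul, factorial_mul_factorial_mul_choose_mul_choose,
    ← descPochhammer_eval_eq_descFactorial, hm', descPochhammer_eval_sub_one_sub]
  simp [pow_mul]

theorem ZMod.natCast_add_add_one_eq_zero {p m m' : ℕ} (h : m + m' + 1 = p) :
    (m + m' + 1 : ZMod p) = 0 := by
  subst h
  exact_mod_cast ZMod.natCast_self _

theorem choose_mul_choose_eq_of_add_add_one_eq {p : ℕ} [Fact p.Prime] {m m' i : ℕ}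
    (h : m + m' + 1 = p) (hi : i < p) :
    (m'.choose i * (m' + i).choose i : ZMod p) = m.choose i * (m + i).choose i := by
  have hfac : (i ! : ZMod p) ≠ 0 := by
    rw [Ne, ZMod.natCast_eq_zero_iff, Nat.Prime.dvd_factorial Fact.out]
    omega
  exact mul_left_cancel₀ (mul_ne_zero hfac hfac)
    (factorial_mul_factorial_mul_choose_mul_choose_eq (ZMod.natCast_add_add_one_eq_zero h) i)

theorem delannoy_eq_sum_range {k N : ℕ} (hN : k < N) (z : ℤ) :
    delannoy k z = ∑ i ∈ range N, (k.choose i : ℤ) * ((k + i).choose i : ℤ) * z ^ i := by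
  refine sum_subset (range_subset_range.2 hN) fun i _ hi ↦ ?_
  rw [choose_eq_zero_of_lt (by simpa using hi), Nat.cast_zero, zero_mul, zero_mul]

theorem delannoy_intCast_eq_of_add_add_one_eq {p : ℕ} [Fact p.Prime] {m m' : ℕ}
    (h : m + m' + 1 = p) (z : ℤ) : (delannoy m' z : ZMod p) = delannoy m z := by
  rw [delannoy_eq_sum_range (N := p) (by omega), delannoy_eq_sum_range (N := p) (by omega)]
  push_cast
  exact sum_congr rfl fun i hi ↦ by rw [choose_mul_choose_eq_of_add_add_one_eq h (mem_range.1 hi)]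

theorem Finset.sum_range_eq_zero_of_reflect_eq_neg {R : Type*} [Ring R] [Nontrivial R]
    [NoZeroDivisors R] (hR : ringChar R ≠ 2) {n : ℕ} {f : ℕ → R}
    (hf : ∀ k < n, f (n - 1 - k) = -f k) : ∑ k ∈ range n, f k = 0 := by
  rw [← Ring.eq_self_iff_eq_zero_of_char_ne_two hR, ← sum_neg_distrib]
  calc ∑ k ∈ range n, -f k = ∑ k ∈ range n, f (n - 1 - k) :=
        sum_congr rfl fun k hk ↦ (hf k (mem_range.1 hk)).symm
    _ = ∑ k ∈ range n, f k := sum_range_reflect f n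

theorem delannoy_odd_power_congruence (p : ℕ) (hp : p.Prime) (hp2 : p ≠ 2)
    (r : ℕ) (z : ℤ) :
    (∑ k ∈ Finset.range p, (2 * (k : ℤ) + 1) ^ (2 * r + 1) * delannoy k z)
      ≡ 0 [ZMOD (p : ℤ)] := by
  have := Fact.mk hp
  rw [← ZMod.intCast_eq_intCast_iff, Int.cast_zero, Int.cast_sum]
  refine sum_range_eq_zero_of_reflect_eq_neg (by rwa [ZMod.ringChar_zmod_n]) fun k hk ↦ ?_
  have hsum : k + (p - 1 - k) + 1 = p := by omega
  have hrefl : ((p - 1 - k : ℕ) : ZMod p) = -k - 1 := by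
    linear_combination ZMod.natCast_add_add_one_eq_zero hsum
  push_cast
  rw [hrefl, delannoy_intCast_eq_of_add_add_one_eq hsum,
    show 2 * (-(k : ZMod p) - 1) + 1 = -(2 * k + 1) by ring, Odd.neg_pow (by simp), neg_mul]
end
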